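/- For every ε ≤ 1/12, there exists a family of n-node undirected positively weighted graphs G such that every positive reweighting H of G in which every shortest path of H is a (1+ε)-approximate shortest path of G has aspect ratio at least 2^{cn} for an absolute constant c > 0. -/

import Mathlib

/-- The weight of a path (list of vertices): sum of weights of consecutive edges. -/
def pathWeight {V : Type} (w : V → V → ℝ) : List V → ℝ
  | [] => 0
  | [_] => 0
  | a :: b :: rest => w a b + pathWeight w (b :: rest)

/-- A nonempty list of vertices is a path if consecutive vertices are joined by edges. -/
def IsPath {V : Type} (E : V → V → Prop) : List V → Prop
  | [] => False
  | [_] => True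
  | a :: b :: rest => E a b ∧ IsPath E (b :: rest)

/-- `p` is a shortest path: it is a path, and no path with the same endpoints is shorter. -/
def IsShortestPath {V : Type} (E : V → V → Prop) (w : V → V → ℝ) (p : List V) : Prop :=
  IsPath E p ∧ ∀ q : List V, IsPath E q → q.head? = p.head? → q.getLast? = p.getLast? →
    pathWeight w p ≤ pathWeight w q

/-- `p` is an α-approximate shortest path: it is a path whose weight is at
most α times the weight of every path with the same endpoints. -/
def IsApproxSP {V : Type} (E : V → V → Prop) (w : V → V → ℝ) (α : ℝ) (p : List V) : Prop :=
  IsPath E p ∧ ∀ q : List V, IsPath E q → q.head? = p.head? → q.getLast? = p.getLast? →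
    pathWeight w p ≤ α * pathWeight w q

/-!
For `k = ⌊n / 5⌋` take 5-cycles `C_0, …, C_{k-1}` whose edges weigh `3^{-l}` on `C_l`, and edges of
weight `3^{1-l}` from position `p` of `C_l` to position `2p` of `C_{l+1}`. The path
`(i, j) → (i+1, 2j) → (i+1, 2j+1) → (i+1, 2j+2)` weighs `11 · 3^{-(i+1)}`, and every other path
between its endpoints weighs at least `12 · 3^{-(i+1)}`: the distance to `(i+1, 2j+2)` inside
`C_i ∪ C_{i+1}` is a feasible potential whose reduced costs stay below `3^{-(i+1)}` only along that
path. As `(13/12) · 11 < 12`, it is the only `(1+ε)`-approximate shortest path, hence the shortest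
path of `H`, so in `H` it is no heavier than the detour through `(i, j+1)`. Summing over `j`, the
cross edges cancel and every edge of `C_{i+1}` occurs twice, so `w_H(C_i) ≥ 2 w_H(C_{i+1})` and
`w_H(C_0) ≥ 2^{k-1} w_H(C_{k-1})`; compare the heaviest edge of `C_0` with the lightest one of
`C_{k-1}`. For `n < 10`, a triangle with weights `1, 1, 3` gives the ratio `2` in the same way.
-/

section Paths

variable {V : Type} {E : V → V → Prop} {w : V → V → ℝ}

theorem isPath_append_right : ∀ {l m : List V}, IsPath E (l ++ m) → m ≠ [] → IsPath E m
  | [], _, h, _ => h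
  | [_], _ :: _, h, _ => h.2
  | _ :: c :: l, _, h, hm => isPath_append_right (l := c :: l) h.2 hm

theorem pathWeight_le_cons (hw : ∀ u v, E u v → 0 ≤ w u v) :
    ∀ {a : V} {l : List V}, IsPath E (a :: l) → pathWeight w l ≤ pathWeight w (a :: l)
  | _, [], _ => le_rfl
  | _, _ :: _, h => le_add_of_nonneg_left (hw _ _ h.1)

theorem pathWeight_le_append_left (hw : ∀ u v, E u v → 0 ≤ w u v) :
    ∀ {l m : List V}, IsPath E (l ++ m) → m ≠ [] → pathWeight w m ≤ pathWeight w (l ++ m)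
  | [], _, _, _ => le_rfl
  | a :: l, m, h, hm =>
    (pathWeight_le_append_left hw (isPath_append_right (l := [a]) h (by simp [hm])) hm).trans
      (pathWeight_le_cons hw h)

theorem exists_nodup_pathWeight_le (hw : ∀ u v, E u v → 0 ≤ w u v) :
    ∀ {p : List V}, IsPath E p → ∃ q, IsPath E q ∧ q.Nodup ∧ q.head? = p.head? ∧
      q.getLast? = p.getLast? ∧ pathWeight w q ≤ pathWeight w p
  | [x], _ => ⟨[x], trivial, List.nodup_singleton x, rfl, rfl, le_rfl⟩
  | x :: y :: r, hp => by
    obtain ⟨q, hq, hnd, hhead, hlast, hle⟩ := exists_nodup_pathWeight_le hw hp.2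
    have hle' : pathWeight w q ≤ pathWeight w (x :: y :: r) :=
      hle.trans (pathWeight_le_cons hw hp)
    by_cases hx : x ∈ q
    · obtain ⟨l₁, l₂, rfl⟩ := List.append_of_mem hx
      refine ⟨x :: l₂, isPath_append_right hq (List.cons_ne_nil _ _),
        hnd.sublist (List.sublist_append_right _ _), rfl, ?_,
        (pathWeight_le_append_left hw hq (List.cons_ne_nil _ _)).trans hle'⟩
      rw [List.getLast?_cons_cons, ← hlast, List.getLast?_append_of_ne_nil _ (List.cons_ne_nil _ _)]
    · obtain ⟨q', rfl⟩ : ∃ q', q = y :: q' := by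
        cases q with
        | nil => exact absurd hq id
        | cons z q' => exact ⟨q', by simpa using hhead⟩
      refine ⟨x :: y :: q', ⟨hp.1, hq⟩, List.nodup_cons.2 ⟨hx, hnd⟩, rfl, ?_,
        (add_le_add_iff_left _).2 hle⟩
      simpa only [List.getLast?_cons_cons] using hlast

theorem exists_isShortestPath [Fintype V] (hw : ∀ u v, E u v → 0 ≤ w u v) {p₀ : List V}
    (hp₀ : IsPath E p₀) :
    ∃ p, IsShortestPath E w p ∧ p.head? = p₀.head? ∧ p.getLast? = p₀.getLast? := by
  set S := {q : List V | IsPath E q ∧ q.Nodup ∧ q.head? = p₀.head? ∧ q.getLast? = p₀.getLast?}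
  have hS : S.Finite := (List.finite_length_le V (Fintype.card V)).subset
    fun q hq => hq.2.1.length_le_card
  obtain ⟨q₀, hq₀, hnd₀, hh₀, hl₀, -⟩ := exists_nodup_pathWeight_le hw hp₀
  obtain ⟨p, ⟨hp, -, hph, hpl⟩, hmin⟩ :=
    Set.exists_min_image S (pathWeight w) hS ⟨q₀, hq₀, hnd₀, hh₀, hl₀⟩
  refine ⟨p, ⟨hp, fun q hq hqh hql => ?_⟩, hph, hpl⟩
  obtain ⟨q', hq', hnd', hh', hl', hle⟩ := exists_nodup_pathWeight_le hw hq
  exact (hmin q' ⟨hq', hnd', hh'.trans (hqh.trans hph), hl'.trans (hql.trans hpl)⟩).trans hle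

theorem sub_le_pathWeight (d : V → ℝ) (hd : ∀ u v, E u v → d u ≤ w u v + d v) :
    ∀ {p : List V} {x y : V}, IsPath E p → p.head? = some x → p.getLast? = some y →
      d x - d y ≤ pathWeight w p
  | [], _, _, h, _, _ => h.elim
  | [_], _, _, _, hx, hy => by
    simp only [List.head?_cons, List.getLast?_singleton, Option.some.injEq] at hx hy
    simp [← hx, ← hy, pathWeight]
  | a :: b :: l, x, y, hp, hx, hy => by
    obtain rfl : a = x := by simpa using hx
    have hb := sub_le_pathWeight d hd hp.2 rfl (by rwa [List.getLast?_cons_cons] at hy)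
    have ha := hd _ _ hp.1
    change _ ≤ w a b + pathWeight w (b :: l)
    linarith

def ReducedCostLT (E : V → V → Prop) (w : V → V → ℝ) (d : V → ℝ) (δ : ℝ) (u v : V) : Prop :=
  E u v ∧ w u v + d v - d u < δ

theorem isPath_reducedCostLT (d : V → ℝ) {δ : ℝ} (hd : ∀ u v, E u v → d u ≤ w u v + d v) :
    ∀ {p : List V} {x y : V}, IsPath E p → p.head? = some x → p.getLast? = some y →
      pathWeight w p < d x - d y + δ → IsPath (ReducedCostLT E w d δ) p
  | [], _, _, h, _, _, _ => h.elim
  | [_], _, _, _, _, _, _ => trivial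
  | a :: b :: l, x, y, hp, hx, hy, hlt => by
    obtain rfl : a = x := by simpa using hx
    have hy' : (b :: l).getLast? = some y := by rwa [List.getLast?_cons_cons] at hy
    have hb := sub_le_pathWeight d hd hp.2 rfl hy'
    have ha := hd _ _ hp.1
    change w a b + pathWeight w (b :: l) < _ at hlt
    exact ⟨⟨hp.1, by linarith⟩, isPath_reducedCostLT d hd hp.2 rfl hy' (by linarith)⟩

theorem eq_of_isPath_of_forced {T : V → V → Prop} :
    ∀ {c p : List V}, c.Nodup → IsPath (fun x y => ∀ v, T x v → v = y) c →
      (∀ x ∈ c.getLast?, ∀ v, ¬ T x v) → IsPath T p → p.head? = c.head? →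
      p.getLast? = c.getLast? → p = c
  | _, [], _, _, _, h, _, _ => h.elim
  | [], _ :: _, _, _, _, _, hh, _ => by simp at hh
  | [_], [_], _, _, _, _, hh, _ => by simpa using hh
  | a :: z :: c, [x], hnd, _, _, _, hh, hl => by
    obtain rfl : x = a := by simpa using hh
    rw [List.getLast?_cons_cons, List.getLast?_singleton, eq_comm] at hl
    exact absurd (List.mem_of_getLast? hl) (List.nodup_cons.1 hnd).1
  | [a], x :: y :: _, _, _, hlast, hp, hh, _ => by
    obtain rfl : x = a := by simpa using hh
    exact (hlast x rfl y hp.1).elim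
  | a :: z :: c, x :: y :: p, hnd, hc, hlast, hp, hh, hl => by
    obtain rfl : x = a := by simpa using hh
    obtain rfl : y = z := hc.1 y hp.1
    rw [List.getLast?_cons_cons, List.getLast?_cons_cons] at hl
    rw [eq_of_isPath_of_forced (List.nodup_cons.1 hnd).2 hc.2
      (by rwa [List.getLast?_cons_cons] at hlast) hp.2 rfl hl]

structure IsShortestPathPreservingReweighting (E : V → V → Prop) (w : V → V → ℝ) (α : ℝ)
    (wH : V → V → ℝ) : Prop where
  pos : ∀ u v, E u v → 0 < wH u v
  approx : ∀ p, IsShortestPath E wH p → IsApproxSP E w α p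

theorem IsShortestPathPreservingReweighting.isShortestPath [Fintype V] {α δ : ℝ} {wH : V → V → ℝ}
    (hR : IsShortestPathPreservingReweighting E w α wH) (d : V → ℝ)
    (hd : ∀ u v, E u v → d u ≤ w u v + d v) {c : List V} {s t : V} (hc : IsPath E c)
    (hnd : c.Nodup) (hs : c.head? = some s) (ht : c.getLast? = some t)
    (hforced : IsPath (fun x y => ∀ v, ReducedCostLT E w d δ x v → v = y) c)
    (hlast : ∀ v, ¬ ReducedCostLT E w d δ t v)
    (hα : α * pathWeight w c < d s - d t + δ) : IsShortestPath E wH c := by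
  obtain ⟨p, hp, hph, hpl⟩ := exists_isShortestPath (fun u v h => (hR.pos u v h).le) hc
  have hpc : pathWeight w p ≤ α * pathWeight w c := (hR.approx p hp).2 c hc hph.symm hpl.symm
  have hpT := isPath_reducedCostLT d hd hp.1 (hph.trans hs) (hpl.trans ht) (hpc.trans_lt hα)
  rwa [eq_of_isPath_of_forced hnd hforced (by simpa [ht] using hlast) hpT hph hpl] at hp

def HasAspectRatioGE (E : V → V → Prop) (wH : V → V → ℝ) (R : ℝ) : Prop :=
  ∃ i j k l, E i j ∧ E k l ∧ R * wH k l ≤ wH i j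

theorem HasAspectRatioGE.mono {wH : V → V → ℝ} {R R' : ℝ} (hpos : ∀ u v, E u v → 0 < wH u v)
    (h : HasAspectRatioGE E wH R) (hR : R' ≤ R) : HasAspectRatioGE E wH R' :=
  let ⟨i, j, k, l, hij, hkl, hle⟩ := h
  ⟨i, j, k, l, hij, hkl, (mul_le_mul_of_nonneg_right hR (hpos k l hkl).le).trans hle⟩

end Paths

namespace Chain

variable {n k : ℕ}

/-- Vertex `5 * l + p` is position `p` of the cycle `C_l`; vertices past `C_{k-1}` are isolated. -/
def level (u : Fin n) : ℕ := u / 5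

def pos (u : Fin n) : ZMod 5 := (u : ℕ)

def Adj (k : ℕ) (u v : Fin n) : Prop :=
  level u < k ∧ level v < k ∧
    (level v = level u ∧ (pos v = pos u + 1 ∨ pos u = pos v + 1) ∨
      level v = level u + 1 ∧ pos v = 2 * pos u ∨ level u = level v + 1 ∧ pos u = 2 * pos v)

noncomputable def weight (u v : Fin n) : ℝ :=
  if level u = level v then 3⁻¹ ^ level u else 3 * 3⁻¹ ^ min (level u) (level v)

theorem adj_symm {u v : Fin n} (h : Adj k u v) : Adj k v u := by
  obtain ⟨hu, hv, h | h | h⟩ := h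
  · exact ⟨hv, hu, Or.inl ⟨h.1.symm, h.2.symm⟩⟩
  · exact ⟨hv, hu, Or.inr (Or.inr h)⟩
  · exact ⟨hv, hu, Or.inr (Or.inl h)⟩

theorem weight_symm (u v : Fin n) : weight u v = weight v u := by
  unfold weight
  split_ifs with h h' h'
  · rw [h]
  · exact absurd h.symm h'
  · exact absurd h'.symm h
  · rw [min_comm]

theorem weight_pos (u v : Fin n) : 0 < weight u v := by
  unfold weight; split_ifs <;> positivity

theorem weight_of_level_eq {u v : Fin n} (h : level v = level u) : weight u v = 3⁻¹ ^ level u :=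
  if_pos h.symm

theorem weight_of_level_succ {u v : Fin n} (h : level v = level u + 1) :
    weight u v = 3 * 3⁻¹ ^ level u := by
  rw [weight, if_neg (by omega), min_eq_left (by omega)]

theorem adj_cases {u v : Fin n} (h : Adj k u v) :
    level v = level u ∧ (pos v = pos u + 1 ∨ pos u = pos v + 1) ∧ weight u v = 3⁻¹ ^ level u ∨
      level v = level u + 1 ∧ pos v = 2 * pos u ∧ weight u v = 3 * 3⁻¹ ^ level u ∨
      level u = level v + 1 ∧ weight u v = 9 * 3⁻¹ ^ level u := by
  obtain ⟨-, -, ⟨hl, hp⟩ | ⟨hl, hp⟩ | ⟨hl, -⟩⟩ := h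
  · exact Or.inl ⟨hl, hp, weight_of_level_eq hl⟩
  · exact Or.inr (Or.inl ⟨hl, hp, weight_of_level_succ hl⟩)
  · refine Or.inr (Or.inr ⟨hl, ?_⟩)
    rw [weight_symm, weight_of_level_succ hl, hl]
    ring

theorem ext_of_level_of_pos {u v : Fin n} (hl : level u = level v) (hp : pos u = pos v) :
    u = v := by
  have hmod : (u : ℕ) % 5 = v % 5 := by
    rw [← ZMod.val_natCast, ← ZMod.val_natCast]; exact congrArg ZMod.val hp
  unfold level at hl
  ext; omega

section Vertex

variable [NeZero n]

def vertex (n : ℕ) [NeZero n] (l : ℕ) (p : ZMod 5) : Fin n := Fin.ofNat n (5 * l + p.val)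

variable {l : ℕ} (p : ZMod 5)

theorem val_vertex (h : 5 * (l + 1) ≤ n) : (vertex n l p : ℕ) = 5 * l + p.val := by
  have := ZMod.val_lt p
  rw [vertex, Fin.val_ofNat, Nat.mod_eq_of_lt (by omega)]

theorem level_vertex (h : 5 * (l + 1) ≤ n) : level (vertex n l p) = l := by
  have := ZMod.val_lt p
  rw [level, val_vertex p h]; omega

theorem pos_vertex (h : 5 * (l + 1) ≤ n) : pos (vertex n l p) = p := by
  rw [pos, val_vertex p h]
  push_cast
  rw [show (5 : ZMod 5) = 0 from rfl, zero_mul, zero_add, ZMod.natCast_zmod_val]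

theorem adj_vertex_add_one (hl : l < k) (h : 5 * (l + 1) ≤ n) :
    Adj k (vertex n l p) (vertex n l (p + 1)) := by
  refine ⟨?_, ?_, Or.inl ⟨?_, Or.inl ?_⟩⟩ <;>
    simp only [level_vertex _ h, pos_vertex _ h, hl]

end Vertex

def cdist (p q : ZMod 5) : ℕ := min (p - q).val (q - p).val

theorem cdist_le_two (p q : ZMod 5) : cdist p q ≤ 2 := by
  revert p q; decide

theorem cdist_le_cdist_add_one {p q : ZMod 5} (h : q = p + 1 ∨ p = q + 1) (r : ZMod 5) :
    cdist p r ≤ cdist q r + 1 := by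
  revert p q r; decide

theorem cdist_add_two (p : ZMod 5) : cdist p (p + 2) = 2 := by
  revert p; decide

theorem eq_add_one_of_cdist_lt {p q r : ZMod 5} (hr : r = p + 1 ∨ r = p + 2)
    (h : q = p + 1 ∨ p = q + 1) (hlt : cdist q r < cdist p r) : q = p + 1 := by
  revert p q r; decide

variable (i : ℕ) (r : ZMod 5)

/-- The distance to position `r` of `C_{i+1}` inside `C_i ∪ C_{i+1}`, in units of
`3⁻¹ ^ (i + 1)`, and `0` outside these two cycles. -/
def potIndex (u : Fin n) : ℕ :=
  if level u = i then 9 + cdist (2 * pos u) r else if level u = i + 1 then cdist (pos u) r else 0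

variable {i r} in
theorem potIndex_of_level_eq {u : Fin n} (h : level u = i) :
    potIndex i r u = 9 + cdist (2 * pos u) r := if_pos h

variable {i r} in
theorem potIndex_of_level_eq_succ {u : Fin n} (h : level u = i + 1) :
    potIndex i r u = cdist (pos u) r := by
  rw [potIndex, if_neg (by omega), if_pos h]

variable {i r} in
theorem potIndex_of_ne {u : Fin n} (h₁ : level u ≠ i) (h₂ : level u ≠ i + 1) :
    potIndex i r u = 0 := by
  rw [potIndex, if_neg h₁, if_neg h₂]

theorem exists_weight_eq_mul {u v : Fin n} (h : Adj k u v) (hu : level u = i ∨ level u = i + 1) :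
    ∃ m : ℕ, weight u v = m * 3⁻¹ ^ (i + 1) ∧ potIndex i r u ≤ m + potIndex i r v ∧
      (m + potIndex i r v ≤ potIndex i r u →
        level u = i ∧ level v = i + 1 ∧ pos v = 2 * pos u ∨
          level u = i + 1 ∧ level v = i + 1 ∧ (pos v = pos u + 1 ∨ pos u = pos v + 1) ∧
            cdist (pos v) r < cdist (pos u) r) := by
  have h₁ := cdist_le_two (2 * pos u) r
  have h₂ := cdist_le_two (pos u) r
  rcases adj_cases h with ⟨hl, hp, hw⟩ | ⟨hl, hp, hw⟩ | ⟨hl, hw⟩ <;> rcases hu with hu | hu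
  · rw [potIndex_of_level_eq hu, potIndex_of_level_eq (hl.trans hu)]
    exact ⟨3, by rw [hw, hu]; ring, by omega, fun h => absurd h (by omega)⟩
  · have := cdist_le_cdist_add_one hp r
    rw [potIndex_of_level_eq_succ hu, potIndex_of_level_eq_succ (hl.trans hu)]
    exact ⟨1, by rw [hw, hu]; ring, by omega, fun h => Or.inr ⟨hu, hl.trans hu, hp, by omega⟩⟩
  · rw [potIndex_of_level_eq hu, potIndex_of_level_eq_succ (by omega), hp]
    exact ⟨9, by rw [hw, hu]; ring, by omega, fun _ => Or.inl ⟨hu, by omega, rfl⟩⟩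
  · rw [potIndex_of_level_eq_succ hu, potIndex_of_ne (by omega) (by omega)]
    exact ⟨3, by rw [hw, hu]; ring, by omega, fun h => absurd h (by omega)⟩
  · rw [potIndex_of_level_eq hu, potIndex_of_ne (by omega) (by omega)]
    exact ⟨27, by rw [hw, hu]; ring, by omega, fun h => absurd h (by omega)⟩
  · rw [potIndex_of_level_eq_succ hu, potIndex_of_level_eq (by omega)]
    exact ⟨9, by rw [hw, hu]; ring, by omega, fun h => absurd h (by omega)⟩

noncomputable def potential (u : Fin n) : ℝ := potIndex i r u * 3⁻¹ ^ (i + 1)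

theorem potential_le {u v : Fin n} (h : Adj k u v) :
    potential i r u ≤ weight u v + potential i r v := by
  by_cases hu : level u = i ∨ level u = i + 1
  · obtain ⟨m, hw, hle, -⟩ := exists_weight_eq_mul i r h hu
    rw [potential, potential, hw, ← add_mul]
    exact mul_le_mul_of_nonneg_right (by exact_mod_cast hle) (by positivity)
  · rw [potential, potIndex_of_ne (not_or.1 hu).1 (not_or.1 hu).2, Nat.cast_zero, zero_mul]
    exact add_nonneg (weight_pos u v).le (by unfold potential; positivity)

theorem reducedCostLT_cases {u v : Fin n}
    (h : ReducedCostLT (Adj k) weight (potential i r) (3⁻¹ ^ (i + 1)) u v)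
    (hu : level u = i ∨ level u = i + 1) :
    level u = i ∧ level v = i + 1 ∧ pos v = 2 * pos u ∨
      level u = i + 1 ∧ level v = i + 1 ∧ (pos v = pos u + 1 ∨ pos u = pos v + 1) ∧
        cdist (pos v) r < cdist (pos u) r := by
  obtain ⟨hadj, hlt⟩ := h
  obtain ⟨m, hw, -, htight⟩ := exists_weight_eq_mul i r hadj hu
  refine htight (Nat.lt_succ_iff.1 ?_)
  rw [potential, potential, hw] at hlt
  have hcast : ((m + potIndex i r v : ℕ) : ℝ) * 3⁻¹ ^ (i + 1) <
      ((potIndex i r u + 1 : ℕ) : ℝ) * 3⁻¹ ^ (i + 1) := by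
    push_cast; linarith
  exact_mod_cast lt_of_mul_lt_mul_right hcast (by positivity)

variable {i r}

theorem reducedCostLT_down {u v : Fin n}
    (h : ReducedCostLT (Adj k) weight (potential i r) (3⁻¹ ^ (i + 1)) u v) (hu : level u = i) :
    level v = i + 1 ∧ pos v = 2 * pos u := by
  rcases reducedCostLT_cases i r h (Or.inl hu) with ⟨-, hl, hp⟩ | ⟨hu', -⟩
  · exact ⟨hl, hp⟩
  · omega

theorem reducedCostLT_forward {u v : Fin n}
    (h : ReducedCostLT (Adj k) weight (potential i r) (3⁻¹ ^ (i + 1)) u v)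
    (hu : level u = i + 1) (hr : r = pos u + 1 ∨ r = pos u + 2) :
    level v = i + 1 ∧ pos v = pos u + 1 := by
  rcases reducedCostLT_cases i r h (Or.inr hu) with ⟨hu', -⟩ | ⟨-, hl, hp, hlt⟩
  · omega
  · exact ⟨hl, eq_add_one_of_cdist_lt hr hp hlt⟩

theorem not_reducedCostLT_of_pos_eq {u v : Fin n} (hu : level u = i + 1) (hr : pos u = r) :
    ¬ ReducedCostLT (Adj k) weight (potential i r) (3⁻¹ ^ (i + 1)) u v := fun h => by
  rcases reducedCostLT_cases i r h (Or.inr hu) with ⟨hu', -⟩ | ⟨-, -, -, hlt⟩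
  · omega
  · simp [hr, cdist] at hlt

section Reweighting

variable [NeZero n] {α : ℝ} {wH : Fin n → Fin n → ℝ}

theorem isShortestPath_canonical (hkn : 5 * k ≤ n) {i : ℕ} (hi : i + 1 < k) (j : ZMod 5)
    (hα : α < 12 / 11) (hR : IsShortestPathPreservingReweighting (Adj k) weight α wH) :
    IsShortestPath (Adj k) wH [vertex n i j, vertex n (i + 1) (2 * j),
      vertex n (i + 1) (2 * j + 1), vertex n (i + 1) (2 * j + 2)] := by
  have hn₀ : 5 * (i + 1) ≤ n := by omega
  have hn₁ : 5 * (i + 1 + 1) ≤ n := by omega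
  set s := vertex n i j
  set a := vertex n (i + 1) (2 * j)
  set b := vertex n (i + 1) (2 * j + 1)
  set t := vertex n (i + 1) (2 * j + 2)
  obtain ⟨hs, hs'⟩ : level s = i ∧ pos s = j := ⟨level_vertex j hn₀, pos_vertex j hn₀⟩
  obtain ⟨ha, ha'⟩ : level a = i + 1 ∧ pos a = 2 * j := ⟨level_vertex _ hn₁, pos_vertex _ hn₁⟩
  obtain ⟨hb, hb'⟩ : level b = i + 1 ∧ pos b = 2 * j + 1 :=
    ⟨level_vertex _ hn₁, pos_vertex _ hn₁⟩
  obtain ⟨ht, ht'⟩ : level t = i + 1 ∧ pos t = 2 * j + 2 :=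
    ⟨level_vertex _ hn₁, pos_vertex _ hn₁⟩
  have hsa : Adj k s a := ⟨by omega, by omega, Or.inr (Or.inl ⟨by omega, by rw [ha', hs']⟩)⟩
  have hab : Adj k a b := ⟨by omega, by omega, Or.inl ⟨by omega, Or.inl (by rw [hb', ha'])⟩⟩
  have hbt : Adj k b t :=
    ⟨by omega, by omega, Or.inl ⟨by omega, Or.inl (by rw [ht', hb']; ring)⟩⟩
  have hnd : [s, a, b, t].Nodup := by
    refine List.Nodup.of_map (fun u => (level u, pos u)) ?_
    simp [hs, hs', ha, ha', hb, hb', ht, ht']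
    decide
  have hU : (0 : ℝ) < 3⁻¹ ^ (i + 1) := by positivity
  have hds : potential i (2 * j + 2) s = 11 * 3⁻¹ ^ (i + 1) := by
    rw [potential, potIndex_of_level_eq hs, hs', cdist_add_two]
    norm_num
  have hdt : potential i (2 * j + 2) t = 0 := by
    rw [potential, potIndex_of_level_eq_succ ht, ht']
    simp [cdist]
  have hw : pathWeight weight [s, a, b, t] = 11 * 3⁻¹ ^ (i + 1) := by
    simp only [pathWeight]
    rw [weight_of_level_succ (by omega), weight_of_level_eq (by omega),
      weight_of_level_eq (by omega), hs, ha, hb]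
    ring
  refine hR.isShortestPath (δ := 3⁻¹ ^ (i + 1)) (s := s) (t := t) (potential i (2 * j + 2))
    (fun _ _ => potential_le i _) ⟨hsa, hab, hbt, trivial⟩ hnd rfl rfl
    ⟨fun v hv => ?_, fun v hv => ?_, fun v hv => ?_, trivial⟩
    (fun _ => not_reducedCostLT_of_pos_eq ht ht') (by rw [hw, hds, hdt]; nlinarith)
  · obtain ⟨hl, hp⟩ := reducedCostLT_down hv hs
    exact ext_of_level_of_pos (by omega) (by rw [hp, hs', ha'])
  · obtain ⟨hl, hp⟩ := reducedCostLT_forward hv ha (Or.inr (by rw [ha']))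
    exact ext_of_level_of_pos (by omega) (by rw [hp, ha', hb'])
  · obtain ⟨hl, hp⟩ := reducedCostLT_forward hv hb (Or.inl (by rw [hb']; ring))
    exact ext_of_level_of_pos (by omega) (by rw [hp, hb', ht']; ring)

def cycleSum (wH : Fin n → Fin n → ℝ) (l : ℕ) : ℝ :=
  ∑ p : ZMod 5, wH (vertex n l p) (vertex n l (p + 1))

theorem two_mul_cycleSum_succ_le (hkn : 5 * k ≤ n) {i : ℕ} (hi : i + 1 < k) (hα : α < 12 / 11)
    (hR : IsShortestPathPreservingReweighting (Adj k) weight α wH) :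
    2 * cycleSum wH (i + 1) ≤ cycleSum wH i := by
  have hn₀ : 5 * (i + 1) ≤ n := by omega
  have hn₁ : 5 * (i + 1 + 1) ≤ n := by omega
  have key (j : ZMod 5) :
      wH (vertex n i j) (vertex n (i + 1) (2 * j)) +
        wH (vertex n (i + 1) (2 * j)) (vertex n (i + 1) (2 * j + 1)) +
        wH (vertex n (i + 1) (2 * j + 1)) (vertex n (i + 1) (2 * j + 2)) ≤
      wH (vertex n i j) (vertex n i (j + 1)) +
        wH (vertex n i (j + 1)) (vertex n (i + 1) (2 * j + 2)) := by
    have hle := (isShortestPath_canonical hkn hi j hα hR).2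
      [vertex n i j, vertex n i (j + 1), vertex n (i + 1) (2 * j + 2)] ?_ rfl rfl
    · simpa only [pathWeight, add_zero, add_assoc] using hle
    · refine ⟨adj_vertex_add_one j (by omega) hn₀,
        ⟨by rw [level_vertex _ hn₀]; omega, by rw [level_vertex _ hn₁]; omega, ?_⟩, trivial⟩
      simp only [level_vertex _ hn₀, level_vertex _ hn₁, pos_vertex _ hn₀, pos_vertex _ hn₁]
      exact Or.inr (Or.inl ⟨trivial, by ring⟩)
  have hsum := Finset.sum_le_sum fun j (_ : j ∈ Finset.univ) => key j
  simp only [Finset.sum_add_distrib] at hsum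
  have hshift := Fintype.sum_bijective (· + 1) (by decide)
    (fun j => wH (vertex n i (j + 1)) (vertex n (i + 1) (2 * j + 2)))
    (fun j => wH (vertex n i j) (vertex n (i + 1) (2 * j))) fun j => by ring_nf
  have heven := Fintype.sum_bijective (2 * ·) (by decide)
    (fun j => wH (vertex n (i + 1) (2 * j)) (vertex n (i + 1) (2 * j + 1)))
    (fun p => wH (vertex n (i + 1) p) (vertex n (i + 1) (p + 1))) fun j => rfl
  have hodd := Fintype.sum_bijective (2 * · + 1) (by decide)
    (fun j => wH (vertex n (i + 1) (2 * j + 1)) (vertex n (i + 1) (2 * j + 2)))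
    (fun p => wH (vertex n (i + 1) p) (vertex n (i + 1) (p + 1))) fun j => by ring_nf
  unfold cycleSum
  linarith

theorem two_pow_mul_cycleSum_le (hkn : 5 * k ≤ n) (hα : α < 12 / 11)
    (hR : IsShortestPathPreservingReweighting (Adj k) weight α wH) :
    ∀ m, m < k → 2 ^ m * cycleSum wH m ≤ cycleSum wH 0
  | 0, _ => by rw [pow_zero, one_mul]
  | m + 1, hm => by
    have := two_mul_cycleSum_succ_le hkn hm hα hR
    have := two_pow_mul_cycleSum_le hkn hα hR m (by omega)
    rw [pow_succ]
    nlinarith [pow_pos (two_pos : (0 : ℝ) < 2) m]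

theorem hasAspectRatioGE (hkn : 5 * k ≤ n) (hk : 0 < k) (hα : α < 12 / 11)
    (hR : IsShortestPathPreservingReweighting (Adj k) weight α wH) :
    HasAspectRatioGE (Adj k) wH (2 ^ (k - 1)) := by
  have hn₀ : 5 * (0 + 1) ≤ n := by omega
  have hn : 5 * (k - 1 + 1) ≤ n := by omega
  obtain ⟨p, -, hp⟩ := Finset.exists_max_image Finset.univ
    (fun p => wH (vertex n 0 p) (vertex n 0 (p + 1))) Finset.univ_nonempty
  obtain ⟨q, -, hq⟩ := Finset.exists_min_image Finset.univ
    (fun q => wH (vertex n (k - 1) q) (vertex n (k - 1) (q + 1))) Finset.univ_nonempty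
  have hmax : cycleSum wH 0 ≤ 5 * wH (vertex n 0 p) (vertex n 0 (p + 1)) := by
    simpa [cycleSum] using Finset.sum_le_card_nsmul Finset.univ _ _ hp
  have hmin : 5 * wH (vertex n (k - 1) q) (vertex n (k - 1) (q + 1)) ≤ cycleSum wH (k - 1) := by
    simpa [cycleSum] using Finset.card_nsmul_le_sum Finset.univ _ _ hq
  have hdecay := two_pow_mul_cycleSum_le hkn hα hR (k - 1) (by omega)
  refine ⟨_, _, _, _, adj_vertex_add_one p hk hn₀, adj_vertex_add_one q (by omega) hn, ?_⟩
  nlinarith [mul_le_mul_of_nonneg_left hmin (by positivity : (0 : ℝ) ≤ 2 ^ (k - 1))]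

end Reweighting

end Chain

namespace Triangle

variable {n : ℕ}

def Adj (u v : Fin n) : Prop := u ≠ v ∧ (u : ℕ) < 3 ∧ (v : ℕ) < 3

noncomputable def weight (u v : Fin n) : ℝ := if (u : ℕ) + v = 2 then 3 else 1

noncomputable def potential (u : Fin n) : ℝ := 2 - (u : ℕ)

theorem adj_symm {u v : Fin n} (h : Adj u v) : Adj v u := ⟨h.1.symm, h.2.2, h.2.1⟩

theorem weight_symm (u v : Fin n) : weight u v = weight v u := by
  rw [weight, weight, add_comm]

theorem weight_pos (u v : Fin n) : 0 < weight u v := by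
  unfold weight; split_ifs <;> norm_num

theorem potential_le_and_tight_eq_succ {u v : Fin n} (h : Adj u v) :
    potential u ≤ weight u v + potential v ∧
      (weight u v + potential v - potential u < 1 → (v : ℕ) = u + 1) := by
  obtain ⟨hne, hu, hv⟩ := h
  have hne' : (u : ℕ) ≠ v := Fin.val_ne_of_ne hne
  unfold weight potential
  interval_cases (u : ℕ) <;> interval_cases (v : ℕ) <;> first | omega | norm_num

theorem hasAspectRatioGE (hn : 3 ≤ n) {α : ℝ} (hα : α < 3 / 2) {wH : Fin n → Fin n → ℝ}
    (hR : IsShortestPathPreservingReweighting Adj weight α wH) : HasAspectRatioGE Adj wH 2 := by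
  set v₀ : Fin n := ⟨0, by omega⟩
  set v₁ : Fin n := ⟨1, by omega⟩
  set v₂ : Fin n := ⟨2, by omega⟩
  have h₀₁ : Adj v₀ v₁ := ⟨by simp [v₀, v₁, Fin.ext_iff], by simp [v₀], by simp [v₁]⟩
  have h₁₂ : Adj v₁ v₂ := ⟨by simp [v₁, v₂, Fin.ext_iff], by simp [v₁], by simp [v₂]⟩
  have h₀₂ : Adj v₀ v₂ := ⟨by simp [v₀, v₂, Fin.ext_iff], by simp [v₀], by simp [v₂]⟩
  have hsucc {u v : Fin n} (h : ReducedCostLT Adj weight potential 1 u v) : (v : ℕ) = u + 1 :=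
    (potential_le_and_tight_eq_succ h.1).2 h.2
  have hsp : IsShortestPath Adj wH [v₀, v₁, v₂] := by
    refine hR.isShortestPath (δ := 1) (s := v₀) (t := v₂) potential
      (fun _ _ h => (potential_le_and_tight_eq_succ h).1) ⟨h₀₁, h₁₂, trivial⟩ ?_ rfl rfl
      ⟨fun v hv => Fin.ext (hsucc hv), fun v hv => Fin.ext (hsucc hv), trivial⟩
      (fun v hv => by have h := hsucc hv; have := hv.1.2.2; simp only [v₂] at h; omega) ?_
    · simp [v₀, v₁, v₂, Fin.ext_iff]
    · simp [pathWeight, weight, potential, v₀, v₁, v₂]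
      linarith
  have hle := hsp.2 [v₀, v₂] ⟨h₀₂, trivial⟩ rfl rfl
  simp only [pathWeight, add_zero] at hle
  rcases le_total (wH v₀ v₁) (wH v₁ v₂) with h | h
  · exact ⟨v₀, v₂, v₀, v₁, h₀₂, h₀₁, by linarith⟩
  · exact ⟨v₀, v₂, v₁, v₂, h₀₂, h₁₂, by linarith⟩

end Triangle

theorem two_rpow_le_two_pow {a : ℝ} {m : ℕ} (h : a ≤ m) : (2 : ℝ) ^ a ≤ 2 ^ m :=
  (Real.rpow_le_rpow_of_exponent_le one_le_two h).trans_eq (Real.rpow_natCast 2 m)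

/-- there is an absolute constant c > 0 such that for every
ε ≤ 1/12 there is a family of n-node positively weighted undirected graphs G
such that every positive symmetric reweighting H in which every shortest path
of H is a (1+ε)-approximate shortest path of G has aspect ratio ≥ 2^(c n). -/
theorem stmt19 : ∃ c : ℝ, 0 < c ∧ ∀ ε : ℝ, 0 ≤ ε → ε ≤ 1 / 12 → ∀ n : ℕ, 5 ≤ n →
    ∃ (E : Fin n → Fin n → Prop) (w : Fin n → Fin n → ℝ),
      (∀ i j, E i j → E j i) ∧ (∀ i j, w i j = w j i) ∧
      (∀ i j, E i j → 0 < w i j) ∧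
      ∀ wH : Fin n → Fin n → ℝ, (∀ i j, wH i j = wH j i) →
        (∀ i j, E i j → 0 < wH i j) →
        (∀ p, IsShortestPath E wH p → IsApproxSP E w (1 + ε) p) →
        ∃ i j k l, E i j ∧ E k l ∧ (2 : ℝ) ^ (c * (n : ℝ)) * wH k l ≤ wH i j := by
  refine ⟨1 / 50, by norm_num, fun ε _ hε n hn => ?_⟩
  by_cases hn₁₀ : n < 10
  · refine ⟨Triangle.Adj, Triangle.weight, fun _ _ => Triangle.adj_symm, Triangle.weight_symm,
      fun u v _ => Triangle.weight_pos u v, fun wH _ hpos happrox => ?_⟩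
    refine (Triangle.hasAspectRatioGE (by omega) (by linarith) ⟨hpos, happrox⟩).mono hpos ?_
    refine (two_rpow_le_two_pow (m := 1) ?_).trans_eq (pow_one 2)
    have : (n : ℝ) ≤ 9 := by exact_mod_cast Nat.le_of_lt_succ hn₁₀
    push_cast; linarith
  · have : NeZero n := ⟨by omega⟩
    refine ⟨Chain.Adj (n / 5), Chain.weight, fun _ _ => Chain.adj_symm, Chain.weight_symm,
      fun u v _ => Chain.weight_pos u v, fun wH _ hpos happrox => ?_⟩
    refine (Chain.hasAspectRatioGE (Nat.mul_div_le n 5) (by omega) (by linarith)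
      ⟨hpos, happrox⟩).mono hpos (two_rpow_le_two_pow ?_)
    have : (n : ℝ) ≤ 50 * ((n / 5 - 1 : ℕ) : ℝ) := by
      exact_mod_cast (by omega : n ≤ 50 * (n / 5 - 1))
    linarith
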